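/- Let y : ℤ → ℝ. For every index i ∈ ℤ and every integer K ≥ 1, S_K(i) = Σ_{k=1}^{K−1} a_k^K · (y_{i−k} + y_{i+k}), where a_k^K = Σ_{l=k+1}^{K} (l−k)/l. -/
import Mathlib


/-- `A_K(i) = (1/K)·Σ_{k=1}^{K−1} ((K−k)·y_{i−k} + k·y_{i+K−k})` (so `A_1(i) = 0`),
here on the integers. -/
noncomputable def mixA (y : ℤ → ℝ) (i : ℤ) (K : ℕ) : ℝ :=
  (1 / (K : ℝ)) * ∑ k ∈ Finset.Icc 1 (K - 1),
    (((K : ℝ) - (k : ℝ)) * y (i - (k : ℤ)) + (k : ℝ) * y (i + ((K - k : ℕ) : ℤ)))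

/-- `S_1(i) = 0` and `S_{K+1}(i) = S_K(i) + A_{K+1}(i)`. -/
noncomputable def mixS (y : ℤ → ℝ) (i : ℤ) : ℕ → ℝ
  | 0 => 0
  | K + 1 => mixS y i K + mixA y i (K + 1)

/-- The coefficient `a_k^K = Σ_{l=k+1}^{K} (l−k)/l`. -/
noncomputable def mixCoeff (k K : ℕ) : ℝ :=
  ∑ l ∈ Finset.Icc (k + 1) K, ((l : ℝ) - (k : ℝ)) / (l : ℝ)

lemma mixA_eq (y : ℤ → ℝ) (i : ℤ) (K : ℕ) :
    mixA y i K = ∑ k ∈ Finset.Icc 1 (K - 1),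
      (((K : ℝ) - (k : ℝ)) / K) * (y (i - (k : ℤ)) + y (i + (k : ℤ))) := by
  unfold mixA
  rw [Finset.sum_add_distrib]
  have h2 : ∑ k ∈ Finset.Icc 1 (K - 1), (k : ℝ) * y (i + ((K - k : ℕ) : ℤ))
      = ∑ k ∈ Finset.Icc 1 (K - 1), ((K : ℝ) - (k : ℝ)) * y (i + (k : ℤ)) := by
    apply Finset.sum_nbij' (fun k => K - k) (fun k => K - k)
    · intro a ha; simp only [Finset.mem_Icc] at *; omega
    · intro a ha; simp only [Finset.mem_Icc] at *; omega
    · intro a ha; simp only [Finset.mem_Icc] at ha; omega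
    · intro a ha; simp only [Finset.mem_Icc] at ha; omega
    · intro a ha
      simp only [Finset.mem_Icc] at ha
      have h2 : ((K - a : ℕ) : ℝ) = (K : ℝ) - (a : ℝ) := by
        have : a ≤ K := by omega
        push_cast [this]; ring
      rw [h2]; ring
  rw [h2, ← Finset.sum_add_distrib, Finset.mul_sum]
  apply Finset.sum_congr rfl
  intro k _
  ring

lemma mixCoeff_succ (k K : ℕ) (hk : k ≤ K) :
    mixCoeff k (K + 1) = mixCoeff k K + (((K : ℝ) + 1 - k) / ((K : ℝ) + 1)) := by
  unfold mixCoeff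
  rw [Finset.sum_Icc_succ_top (by omega : k + 1 ≤ K + 1)]
  push_cast; ring

lemma mixCoeff_self (K : ℕ) : mixCoeff K K = 0 := by
  unfold mixCoeff
  rw [Finset.Icc_eq_empty (by omega), Finset.sum_empty]

lemma localMixup_S_coeff_form_aux (y : ℤ → ℝ) (i : ℤ) (K : ℕ) :
    mixS y i K = ∑ k ∈ Finset.Icc 1 (K - 1), mixCoeff k K * (y (i - k) + y (i + k)) := by
  induction K with
  | zero => simp [mixS]
  | succ K ih =>
    show mixS y i K + mixA y i (K + 1) = _
    have hext : mixS y i K = ∑ k ∈ Finset.Icc 1 K, mixCoeff k K * (y (i - k) + y (i + k)) := by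
      rw [ih]
      apply Finset.sum_subset
      · intro x hx; simp only [Finset.mem_Icc] at *; omega
      · intro x hx hx'
        simp only [Finset.mem_Icc] at hx hx'
        have : x = K := by omega
        subst this
        rw [mixCoeff_self, zero_mul]
    rw [hext, mixA_eq]
    have : (K + 1 - 1 : ℕ) = K := rfl
    rw [this]
    rw [← Finset.sum_add_distrib]
    apply Finset.sum_congr rfl
    intro k hk
    simp only [Finset.mem_Icc] at hk
    rw [mixCoeff_succ k K hk.2]
    push_cast
    ring

/-- For `y : ℤ → ℝ`, every index `i ∈ ℤ` and every `K ≥ 1`,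
`S_K(i) = Σ_{k=1}^{K−1} a_k^K · (y_{i−k} + y_{i+k})` where `a_k^K = Σ_{l=k+1}^{K} (l−k)/l`. -/
theorem localMixup_S_coeff_form (y : ℤ → ℝ) (i : ℤ) (K : ℕ) (hK : 1 ≤ K) :
    mixS y i K = ∑ k ∈ Finset.Icc 1 (K - 1), mixCoeff k K * (y (i - k) + y (i + k)) := by
  exact localMixup_S_coeff_form_aux y i K
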